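/- Let j ∈ {1,…,n}, λ ∈ ℂ, and let K ⊆ ℝ^n be a compact, e_j-normal set with the zero surface. Then S̃_{j,λ}(𝓘_K) ⊆ 𝓘_K; that is, if F ∈ C^∞(ℝ^n,ℂ) is flat on K, then S̃_{j,λ}F is flat on K. -/

import Mathlib

/-
Common setup: the space `C^∞(ℝⁿ,ℂ)` of smooth complex-valued functions on `ℝⁿ`
with the Fréchet topology of uniform convergence of all partial derivatives on
compact sets, the ideal `𝓘_K` of functions flat on a compact set `K`, and the
space of Whitney functions `ℰ(K) = C^∞(ℝⁿ,ℂ)/𝓘_K` with the quotient topology.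
-/

noncomputable section
open scoped ContDiff

abbrev Rn (n : ℕ) : Type := Fin n → ℝ

/-- The partial derivative `D_j = ∂/∂x_j` of a complex-valued function on `ℝⁿ`. -/
def pd (n : ℕ) (j : Fin n) (F : Rn n → ℂ) : Rn n → ℂ :=
  fun x => fderiv ℝ F x (Pi.single j 1)

lemma contDiff_pd {n : ℕ} (j : Fin n) {F : Rn n → ℂ} (hF : ContDiff ℝ ∞ F) :
    ContDiff ℝ ∞ (pd n j F) :=
  (hF.fderiv_right (le_refl _)).clm_apply contDiff_const

/-- The submodule of functions in `ℝⁿ → ℂ` which are `C^∞`-smooth. -/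
def SmoothSub (n : ℕ) : Submodule ℂ (Rn n → ℂ) where
  carrier := {F | ContDiff ℝ ∞ F}
  add_mem' := by
    intro a b ha hb
    simp only [Set.mem_setOf_eq] at *
    exact ha.add hb
  zero_mem' := by
    simp only [Set.mem_setOf_eq]
    exact contDiff_const
  smul_mem' := by
    intro c F hF
    simp only [Set.mem_setOf_eq] at *
    exact hF.const_smul c

/-- The space `C^∞(ℝⁿ,ℂ)` of smooth complex-valued functions on `ℝⁿ`. -/
abbrev SmoothFun (n : ℕ) : Type := ↥(SmoothSub n)

lemma SmoothFun.smooth {n : ℕ} (F : SmoothFun n) : ContDiff ℝ ∞ F.1 := F.2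

lemma SmoothFun.smoothNat {n : ℕ} (F : SmoothFun n) (k : ℕ) : ContDiff ℝ k F.1 :=
  F.smooth.of_le (by exact_mod_cast le_top)

/-- The Fréchet topology on `C^∞(ℝⁿ,ℂ)` of uniform convergence of all
derivatives on compact subsets of `ℝⁿ`. -/
instance smoothFunTopology (n : ℕ) : TopologicalSpace (SmoothFun n) :=
  TopologicalSpace.induced
    (fun F : SmoothFun n => fun k : ℕ =>
      UniformOnFun.ofFun {K : Set (Rn n) | IsCompact K} (iteratedFDeriv ℝ k F.1))
    inferInstance

/-- `F` is flat on `K`: all derivatives of `F` vanish at every point of `K`. -/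
def FlatOn (n : ℕ) (F : Rn n → ℂ) (K : Set (Rn n)) : Prop :=
  ∀ (k : ℕ), ∀ x ∈ K, iteratedFDeriv ℝ k F x = 0

/-- The ideal `𝓘_K` of smooth functions flat on `K`. -/
def IdealK (n : ℕ) (K : Set (Rn n)) : Submodule ℂ (SmoothFun n) where
  carrier := {F | FlatOn n F.1 K}
  zero_mem' := by
    intro k x _
    show iteratedFDeriv ℝ k (fun _ => (0:ℂ)) x = 0
    rw [iteratedFDeriv_zero_fun]; rfl
  add_mem' := by
    intro F G hF hG k x hx
    show iteratedFDeriv ℝ k (F.1 + G.1) x = 0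
    rw [iteratedFDeriv_add_apply (F.smoothNat k).contDiffAt (G.smoothNat k).contDiffAt, hF k x hx, hG k x hx, add_zero]
  smul_mem' := by
    intro c F hF k x hx
    show iteratedFDeriv ℝ k (c • F.1) x = 0
    rw [iteratedFDeriv_const_smul_apply (F.smoothNat k).contDiffAt, hF k x hx, smul_zero]

/-- The space of Whitney functions `ℰ(K) = C^∞(ℝⁿ,ℂ)/𝓘_K`, a quotient vector
space carrying the quotient topology. -/
abbrev WhitneyE (n : ℕ) (K : Set (Rn n)) : Type := SmoothFun n ⧸ IdealK n K

/-- The operator `S̃_{j,λ}`: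
`(S̃_{j,λ}F)(x) = ∫_0^{x_j} F(x^{(j,t)}) e^{λ(x_j - t)} dt`, where
`x^{(j,t)} = (x_1,…,x_{j-1},t,x_{j+1},…,x_n)`. -/
def Stilde (n : ℕ) (j : Fin n) (lam : ℂ) (F : Rn n → ℂ) : Rn n → ℂ :=
  fun x => ∫ t in (0:ℝ)..(x j), F (Function.update x j t) * Complex.exp (lam * (x j - t))

/-- `K` is `v`-normal with the zero surface: `φ ≤ 0 ≤ ψ` on `K_v`. -/
def VNormalZero (n : ℕ) (v : Rn n) (K : Set (Rn n)) : Prop :=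
  ∃ (Kv : Set (Rn n)) (φ ψ : Rn n → ℝ),
    IsCompact Kv ∧ (∀ x ∈ Kv, ∑ i, x i * v i = 0) ∧ (∀ x ∈ Kv, φ x ≤ 0 ∧ 0 ≤ ψ x) ∧
    K = {y | ∃ x ∈ Kv, ∃ t ∈ Set.Icc (φ x) (ψ x), y = t • v + x}

/-
`S̃ = S̃_{j,λ}` is a variation-of-constants operator along the `x_j`-direction:
`∂_j (S̃F) = F + λ S̃F`, while `∂_i (S̃F) = S̃(∂_i F)` for `i ≠ j`. Hence every
derivative of order `k + 1` of `S̃F` is a derivative of order `k` of `F`, of `S̃F`,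
or of `S̃G` for a partial derivative `G` of `F`, so by induction on `k` it suffices
that `S̃G` vanishes on `K` whenever `G` does. That holds because for `x ∈ K` the
whole segment from `x^{(j,0)}` to `x` lies in `K`, as `φ ≤ 0 ≤ ψ`.
-/

section ParametricIntegral

open intervalIntegral Metric
open scoped Interval

theorem exists_bound_ball_uIoc {X V : Type*} [PseudoMetricSpace X] [ProperSpace X]
    [NormedAddCommGroup V] {g : X → ℝ → V} (hg : Continuous g.uncurry) (x₀ : X) (a b : ℝ) :
    ∃ C, ∀ t ∈ Ι a b, ∀ x ∈ ball x₀ 1, ‖g x t‖ ≤ C := by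
  have hcompact : IsCompact (closedBall x₀ 1 ×ˢ Set.uIcc a b) :=
    (isCompact_closedBall x₀ 1).prod isCompact_uIcc
  obtain ⟨C, hC⟩ := hcompact.exists_bound_of_continuousOn hg.continuousOn
  exact ⟨C, fun t ht x hx => hC (x, t) ⟨ball_subset_closedBall hx, Set.uIoc_subset_uIcc ht⟩⟩

variable {E W : Type*} [NormedAddCommGroup E] [NormedSpace ℝ E]
  [NormedAddCommGroup W] [NormedSpace ℝ W]

theorem hasFDerivAt_intervalIntegral_of_continuous [ProperSpace E] {f : E → ℝ → W}
    {f' : E → ℝ → E →L[ℝ] W} (hf : Continuous f.uncurry) (hf' : Continuous f'.uncurry)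
    (hderiv : ∀ x t, HasFDerivAt (f · t) (f' x t) x) (a b : ℝ) (x₀ : E) :
    HasFDerivAt (fun x => ∫ t in a..b, f x t) (∫ t in a..b, f' x₀ t) x₀ := by
  obtain ⟨C, hC⟩ := exists_bound_ball_uIoc hf' x₀ a b
  exact hasFDerivAt_integral_of_dominated_of_fderiv_le (ball_mem_nhds x₀ one_pos)
    (.of_forall fun x => (hf.uncurry_left x).aestronglyMeasurable)
    ((hf.uncurry_left x₀).intervalIntegrable a b) (hf'.uncurry_left x₀).aestronglyMeasurable
    (.of_forall fun t ht x hx => hC t ht x hx) intervalIntegrable_const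
    (.of_forall fun t _ x _ => hderiv x t)

theorem hasDerivAt_intervalIntegral_of_continuous {f f' : ℝ → ℝ → W}
    (hf : Continuous f.uncurry) (hf' : Continuous f'.uncurry)
    (hderiv : ∀ s t, HasDerivAt (f · t) (f' s t) s) (a b s₀ : ℝ) :
    HasDerivAt (fun s => ∫ t in a..b, f s t) (∫ t in a..b, f' s₀ t) s₀ := by
  obtain ⟨C, hC⟩ := exists_bound_ball_uIoc hf' s₀ a b
  exact (hasDerivAt_integral_of_dominated_loc_of_deriv_le (ball_mem_nhds s₀ one_pos)
    (.of_forall fun s => (hf.uncurry_left s).aestronglyMeasurable)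
    ((hf.uncurry_left s₀).intervalIntegrable a b) (hf'.uncurry_left s₀).aestronglyMeasurable
    (.of_forall fun t ht s hs => hC t ht s hs) intervalIntegrable_const
    (.of_forall fun t _ s _ => hderiv s t)).2

variable [CompleteSpace W] [FiniteDimensional ℝ E]

theorem contDiff_parametric_intervalIntegral_of_contDiff {f : E → ℝ → W}
    (hf : ContDiff ℝ ∞ f.uncurry) (a b : ℝ) :
    ContDiff ℝ ∞ (fun x => ∫ t in a..b, f x t) := by
  refine contDiff_infty.2 fun k => ?_
  induction k generalizing W with
  | zero =>
    exact contDiff_zero.2 (continuous_parametric_intervalIntegral_of_continuous' hf.continuous a b)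
  | succ k ih =>
    set f' : E → ℝ → E →L[ℝ] W := fun x t => (fderiv ℝ f.uncurry (x, t)).comp (.inl ℝ E ℝ)
    have hf' : Continuous f'.uncurry :=
      (hf.continuous_fderiv (by simp)).clm_comp continuous_const
    have hderiv : ∀ x t, HasFDerivAt (f · t) (f' x t) x := fun x t =>
      (hf.differentiable (by simp) (x, t)).hasFDerivAt.comp (f := fun e => (e, t)) x
        (hasFDerivAt_prodMk_left x t)
    have hfderiv := hasFDerivAt_intervalIntegral_of_continuous hf.continuous hf' hderiv a b
    push_cast
    refine contDiff_succ_iff_fderiv_apply.2 ⟨fun x => (hfderiv x).differentiableAt, by simp,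
      fun v => ?_⟩
    simp only [(hfderiv _).fderiv,
      ContinuousLinearMap.intervalIntegral_apply ((hf'.uncurry_left _).intervalIntegrable a b)]
    exact ih (f := fun x t => f' x t v) ((hf.fderiv_right le_rfl).clm_apply contDiff_const)

theorem contDiff_parametric_primitive_of_contDiff {f : E → ℝ → W}
    (hf : ContDiff ℝ ∞ f.uncurry) {g : E → ℝ} (hg : ContDiff ℝ ∞ g) (a : ℝ) :
    ContDiff ℝ ∞ (fun x => ∫ t in a..g x, f x t) := by
  have hsubst : ∀ x,
      ∫ t in a..g x, f x t = (g x - a) • ∫ u in (0:ℝ)..1, f x (a + (g x - a) * u) := by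
    intro x
    rw [intervalIntegral.smul_integral_comp_add_mul]
    simp
  simp only [hsubst]
  refine (hg.sub contDiff_const).smul (contDiff_parametric_intervalIntegral_of_contDiff ?_ 0 1)
  exact hf.comp (contDiff_fst.prodMk (contDiff_const.add
    (((hg.comp contDiff_fst).sub contDiff_const).mul contDiff_snd)))

end ParametricIntegral

theorem ContDiff.update {𝕜 E ι : Type*} [NontriviallyNormedField 𝕜] [NormedAddCommGroup E]
    [NormedSpace 𝕜 E] [Fintype ι] [DecidableEq ι] {F : ι → Type*}
    [∀ i, NormedAddCommGroup (F i)] [∀ i, NormedSpace 𝕜 (F i)] {k : WithTop ℕ∞}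
    {f : E → ∀ i, F i} {i : ι} {g : E → F i} (hf : ContDiff 𝕜 k f) (hg : ContDiff 𝕜 k g) :
    ContDiff 𝕜 k (fun a => Function.update (f a) i (g a)) := by
  refine contDiff_pi.2 fun l => ?_
  rcases eq_or_ne l i with rfl | hl
  · simpa using hg
  · simpa [Function.update_of_ne hl] using contDiff_pi.1 hf l

theorem hasDerivAt_integral_mul_cexp {φ : ℝ → ℂ} (hφ : Continuous φ) (lam : ℂ) (s : ℝ) :
    HasDerivAt (fun s : ℝ => ∫ t in (0:ℝ)..s, φ t * Complex.exp (lam * (s - t)))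
      (φ s + lam * ∫ t in (0:ℝ)..s, φ t * Complex.exp (lam * (s - t))) s := by
  have hfactor : ∀ s : ℝ, ∫ t in (0:ℝ)..s, φ t * Complex.exp (lam * (s - t))
      = Complex.exp (lam * s) * ∫ t in (0:ℝ)..s, φ t * Complex.exp (-(lam * t)) := by
    intro s
    rw [← intervalIntegral.integral_const_mul]
    congr 1 with t
    rw [mul_sub, sub_eq_add_neg, Complex.exp_add]
    ring
  simp only [hfactor]
  have hexp :
      HasDerivAt (fun s : ℝ => Complex.exp (lam * s)) (Complex.exp (lam * s) * lam) s := by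
    simpa using (((hasDerivAt_id s).ofReal_comp).const_mul lam).cexp
  have hcont : Continuous fun t : ℝ => φ t * Complex.exp (-(lam * t)) := by fun_prop
  have hprim := (hcont.integral_hasStrictDerivAt 0 s).hasDerivAt
  have hinv : Complex.exp (lam * s) * Complex.exp (-(lam * s)) = 1 := by
    rw [← Complex.exp_add, add_neg_cancel, Complex.exp_zero]
  exact (hexp.mul hprim).congr_deriv (by linear_combination φ s * hinv)

section Stilde

variable {n : ℕ} {j : Fin n} {lam : ℂ} {F : Rn n → ℂ}

theorem hasDerivAt_update_pd {G : Rn n → ℂ} {x : Rn n} (hG : DifferentiableAt ℝ G x) :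
    HasDerivAt (fun s => G (Function.update x j s)) (pd n j G x) (x j) := by
  rw [← Function.update_eq_self j x] at hG
  simpa [pd, Function.comp_def] using
    hG.hasFDerivAt.comp_hasDerivAt (x j) (hasDerivAt_update x j (x j))

theorem contDiff_stilde (hF : ContDiff ℝ ∞ F) : ContDiff ℝ ∞ (Stilde n j lam F) := by
  have hexp : ContDiff ℝ ∞ fun p : Rn n × ℝ => Complex.exp (lam * (p.1 j - p.2)) := by
    have hre : ContDiff ℝ ∞ fun p : Rn n × ℝ => ((p.1 j : ℝ) : ℂ) :=
      Complex.ofRealCLM.contDiff.comp ((contDiff_apply ℝ ℝ j).comp contDiff_fst)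
    exact (contDiff_const.mul (hre.sub (Complex.ofRealCLM.contDiff.comp contDiff_snd))).cexp
  exact contDiff_parametric_primitive_of_contDiff
    (f := fun x t => F (Function.update x j t) * Complex.exp (lam * (x j - t)))
    ((hF.comp (contDiff_fst.update contDiff_snd)).mul hexp) (contDiff_apply ℝ ℝ j) 0

theorem pd_stilde_self (hF : ContDiff ℝ ∞ F) :
    pd n j (Stilde n j lam F) = F + lam • Stilde n j lam F := by
  funext x
  have hline := hasDerivAt_integral_mul_cexp (φ := fun t => F (Function.update x j t))
    (hF.continuous.comp (continuous_const.update j continuous_id)) lam (x j)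
  simp only [Function.update_eq_self] at hline
  refine (hasDerivAt_update_pd ((contDiff_stilde hF).differentiable (by simp) x)).unique ?_
  simpa [Stilde] using hline

theorem pd_stilde_of_ne {i : Fin n} (hij : i ≠ j) (hF : ContDiff ℝ ∞ F) :
    pd n i (Stilde n j lam F) = Stilde n j lam (pd n i F) := by
  funext x
  have hline : (fun s => Stilde n j lam F (Function.update x i s)) = fun s =>
      ∫ t in (0:ℝ)..x j,
        F (Function.update (Function.update x j t) i s) * Complex.exp (lam * (x j - t)) := by
    funext s
    simp only [Stilde, Function.update_of_ne hij.symm, Function.update_comm hij]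
  have hderiv : ∀ s t, HasDerivAt (fun s => F (Function.update (Function.update x j t) i s))
      (pd n i F (Function.update (Function.update x j t) i s)) s := by
    intro s t
    simpa using hasDerivAt_update_pd (j := i) (hF.differentiable (by simp)
      (Function.update (Function.update x j t) i s))
  have h := hasDerivAt_intervalIntegral_of_continuous
    (f := fun s t =>
      F (Function.update (Function.update x j t) i s) * Complex.exp (lam * (x j - t)))
    (f' := fun s t =>
      pd n i F (Function.update (Function.update x j t) i s) * Complex.exp (lam * (x j - t)))
    ((hF.continuous.comp (by fun_prop)).mul (by fun_prop))
    (((contDiff_pd i hF).continuous.comp (by fun_prop)).mul (by fun_prop))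
    (fun s t => (hderiv s t).mul_const _) 0 (x j) (x i)
  rw [← hline] at h
  refine (hasDerivAt_update_pd ((contDiff_stilde hF).differentiable (by simp) x)).unique ?_
  have hfix : ∀ t, Function.update (Function.update x j t) i (x i) = Function.update x j t :=
    fun t => Function.update_eq_self_iff.2 (Function.update_of_ne hij _ _).symm
  simpa [Stilde, hfix] using h

end Stilde

section Flatness

variable {n : ℕ}

theorem pd_eq_apply_comp (i : Fin n) (g : Rn n → ℂ) :
    pd n i g = ⇑(ContinuousLinearMap.apply ℝ ℂ (Pi.single i 1 : Rn n)) ∘ fderiv ℝ g :=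
  rfl

theorem iteratedFDeriv_succ_eq_zero_iff {g : Rn n → ℂ} (hg : ContDiff ℝ ∞ g) {x : Rn n}
    {k : ℕ} :
    iteratedFDeriv ℝ (k + 1) g x = 0 ↔ ∀ i, iteratedFDeriv ℝ k (pd n i g) x = 0 := by
  have hpd : ∀ i, iteratedFDeriv ℝ k
      (⇑(ContinuousLinearMap.apply ℝ ℂ (Pi.single i 1 : Rn n)) ∘ fderiv ℝ g) x =
      (ContinuousLinearMap.apply ℝ ℂ (Pi.single i 1 : Rn n)).compContinuousMultilinearMap
        (iteratedFDeriv ℝ k (fderiv ℝ g) x) := fun i =>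
    ContinuousLinearMap.iteratedFDeriv_comp_left (f := fderiv ℝ g) _
      (hg.fderiv_right (m := ∞) le_rfl).contDiffAt (by exact_mod_cast le_top)
  rw [← norm_eq_zero, ← norm_iteratedFDeriv_fderiv, norm_eq_zero]
  simp only [pd_eq_apply_comp, hpd]
  refine ⟨fun h i => by ext; simp [h], fun h => ?_⟩
  ext m v
  have hbasis : ∀ i, iteratedFDeriv ℝ k (fderiv ℝ g) x m (Pi.single i 1) = 0 := fun i => by
    simpa using congr($(h i) m)
  rw [← Finset.univ_sum_single v, map_sum]
  refine Finset.sum_eq_zero fun i _ => ?_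
  rw [← mul_one (v i), ← smul_eq_mul, Pi.single_smul', map_smul, hbasis, smul_zero]

theorem FlatOn.pd {g : Rn n → ℂ} {K : Set (Rn n)} (hflat : FlatOn n g K) (hg : ContDiff ℝ ∞ g)
    (i : Fin n) : FlatOn n (pd n i g) K :=
  fun k x hx => (iteratedFDeriv_succ_eq_zero_iff hg).1 (hflat (k + 1) x hx) i

theorem FlatOn.eq_zero {g : Rn n → ℂ} {K : Set (Rn n)} (hflat : FlatOn n g K) {x : Rn n}
    (hx : x ∈ K) : g x = 0 := by
  simpa using congrArg norm (hflat 0 x hx)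

end Flatness

section NormalSet

variable {n : ℕ} {j : Fin n} {K : Set (Rn n)}

theorem VNormalZero.update_mem (hKn : VNormalZero n (Pi.single j 1) K) {x : Rn n} (hx : x ∈ K)
    {t : ℝ} (ht : t ∈ Set.uIcc 0 (x j)) : Function.update x j t ∈ K := by
  obtain ⟨Kv, φ, ψ, -, hplane, hsign, rfl⟩ := hKn
  obtain ⟨y, hy, s, hs, rfl⟩ := hx
  have hyj : y j = 0 := by simpa [Pi.single_apply] using hplane y hy
  refine ⟨y, hy, t, ?_, ?_⟩
  · have hxj : (s • (Pi.single j 1 : Rn n) + y) j = s := by simp [hyj]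
    rw [hxj] at ht
    exact Set.uIcc_subset_Icc ⟨(hsign y hy).1, (hsign y hy).2⟩ hs ht
  · funext i
    rcases eq_or_ne i j with rfl | hij
    · simp [hyj]
    · simp [hij]

theorem stilde_eq_zero_of_eqOn_zero (hKn : VNormalZero n (Pi.single j 1) K) (lam : ℂ)
    {H : Rn n → ℂ} (hH : Set.EqOn H 0 K) {x : Rn n} (hx : x ∈ K) : Stilde n j lam H x = 0 :=
  (intervalIntegral.integral_congr fun _ ht => by
    rw [hH (hKn.update_mem hx ht), Pi.zero_apply, zero_mul]).trans
    intervalIntegral.integral_zero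

end NormalSet

theorem stmt12_general (n : ℕ) (j : Fin n) (lam : ℂ) (K : Set (Rn n))
    (hKn : VNormalZero n (Pi.single j 1) K)
    (F : Rn n → ℂ) (hF : ContDiff ℝ ∞ F) (hflat : FlatOn n F K) :
    FlatOn n (Stilde n j lam F) K := by
  intro k
  induction k generalizing F with
  | zero =>
    intro x hx
    rw [← norm_eq_zero, norm_iteratedFDeriv_zero, norm_eq_zero]
    exact stilde_eq_zero_of_eqOn_zero hKn lam (fun _ hy => hflat.eq_zero hy) hx
  | succ k ih =>
    intro x hx
    refine (iteratedFDeriv_succ_eq_zero_iff (contDiff_stilde hF)).2 fun i => ?_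
    rcases eq_or_ne i j with rfl | hij
    · have hsmooth : ∀ {g : Rn n → ℂ}, ContDiff ℝ ∞ g → ContDiffAt ℝ k g x :=
        fun hg => hg.contDiffAt.of_le (mod_cast le_top)
      have hS := contDiff_stilde (j := i) (lam := lam) hF
      rw [pd_stilde_self hF,
        iteratedFDeriv_add_apply (g := lam • Stilde n i lam F) (hsmooth hF)
          (hsmooth (hS.const_smul lam)),
        iteratedFDeriv_const_smul_apply (hsmooth hS), hflat k x hx, ih F hF hflat x hx,
        smul_zero, add_zero]
    · rw [pd_stilde_of_ne hij hF]
      exact ih _ (contDiff_pd i hF) (hflat.pd hF i) x hx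

/-- If `K` is a compact, `e_j`-normal set with the zero
surface, then `S̃_{j,λ}(𝓘_K) ⊆ 𝓘_K`: if the smooth function `F` is flat on `K`
then `S̃_{j,λ}F` is flat on `K`. -/
theorem stmt12 (n : ℕ) (j : Fin n) (lam : ℂ) (K : Set (Rn n)) (hK : IsCompact K)
    (hKn : VNormalZero n (Pi.single j 1) K)
    (F : Rn n → ℂ) (hF : ContDiff ℝ ∞ F) (hflat : FlatOn n F K) :
    FlatOn n (Stilde n j lam F) K :=
  stmt12_general n j lam K hKn F hF hflat
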